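/- The kernel integral equation has at most one continuous solution: if G¹, G² : E → ℝ are continuous and satisfy Gⁱ = G₀ + Φ_{Gⁱ} on E for i = 1,2, then G¹ = G². -/

import Mathlib

/-!
The difference `D = G₁ - G₂` solves the homogeneous equation `D = Φ_D`, and `Φ` is a Volterra
operator in `η`: if `|D τ s| ≤ β s` on `E`, then `|Φ_D ξ η| ≤ (L + C) ∫₀^η β`, where `L` bounds `μ̃`
on `E` and `C` bounds `f` (the widths `ξ - η ≤ 2` and `η ≤ 1` absorb the weights `1/4` and `1/2`).
Iterating from a uniform bound `M` gives `|D| ≤ M ((L + C) η)ⁿ / n!`, which tends to `0`.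
Linearity of `Φ` needs integrability, obtained by replacing `c₁`, `G₁`, `G₂` by continuous
(Tietze) extensions: `Φ` only sees their values on `[0, 1]` and on `E`.
-/

open MeasureTheory intervalIntegral

/-- The domain `E = {(ξ,η) : 0 ≤ η ≤ 1, η ≤ ξ ≤ 2-η}`. -/
def Eset : Set (ℝ × ℝ) := {q | 0 ≤ q.2 ∧ q.2 ≤ 1 ∧ q.2 ≤ q.1 ∧ q.1 ≤ 2 - q.2}

/-- `μ̃(ξ,η) = λ₀ - c₁((ξ+η)/2) + c₁((ξ-η)/2)`. -/
noncomputable def muT (c1 : ℝ → ℝ) (lam0 ξ η : ℝ) : ℝ :=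
  lam0 - c1 ((ξ + η) / 2) + c1 ((ξ - η) / 2)

/-- The integral operator `Φ_H` of the kernel integral equation. -/
noncomputable def PhiOp (c1 : ℝ → ℝ) (lam0 : ℝ) (f : ℝ → ℝ → ℝ) (H : ℝ → ℝ → ℝ)
    (ξ η : ℝ) : ℝ :=
  (1 / 4) * (∫ τ in η..ξ, ∫ s in (0:ℝ)..η, muT c1 lam0 τ s * H τ s)
    + (1 / 2) * (∫ τ in (0:ℝ)..η, ∫ s in (0:ℝ)..τ, muT c1 lam0 τ s * H τ s)
    + (1 / 4) * (∫ z in η..ξ, ∫ s in (0:ℝ)..η, ∫ τ in z..(z + η - s),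
        f ((τ - s) / 2) (z - (τ + s) / 2) * H τ s)
    + (1 / 2) * (∫ z in (0:ℝ)..η, ∫ s in (0:ℝ)..z, ∫ τ in z..(2 * z - s),
        f ((τ - s) / 2) (z - (τ + s) / 2) * H τ s)

/-- The inhomogeneous term `G₀` of the kernel integral equation. -/
noncomputable def Gzero (lam0 : ℝ) (f : ℝ → ℝ → ℝ) (ξ η : ℝ) : ℝ :=
  lam0 / 4 * (ξ + η)
    + (1 / 4) * (∫ τ in η..ξ, ∫ s in (0:ℝ)..η, f ((τ + s) / 2) ((τ - s) / 2))
    + (1 / 2) * (∫ τ in (0:ℝ)..η, ∫ s in (0:ℝ)..τ, f ((τ + s) / 2) ((τ - s) / 2))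

open Set Filter Function Topology Nat

lemma isClosed_Eset : IsClosed Eset :=
  (isClosed_le continuous_const continuous_snd).inter <|
    (isClosed_le continuous_snd continuous_const).inter <|
      (isClosed_le continuous_snd continuous_fst).inter <|
        isClosed_le continuous_fst (continuous_const.sub continuous_snd)

lemma isCompact_Eset : IsCompact Eset :=
  isCompact_Icc.of_isClosed_subset isClosed_Eset
    fun q ⟨h0, h1, h2, h3⟩ => (⟨⟨by linarith, h0⟩, ⟨by linarith, h1⟩⟩ : q ∈ Icc (0, 0) (2, 1))

lemma mk_mem_Eset_iff {τ s : ℝ} : (τ, s) ∈ Eset ↔ 0 ≤ s ∧ s ≤ 1 ∧ s ≤ τ ∧ τ ≤ 2 - s :=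
  Iff.rfl

lemma zero_mem_Eset : ((0 : ℝ), (0 : ℝ)) ∈ Eset := by
  refine ⟨?_, ?_, ?_, ?_⟩ <;> norm_num

lemma ContinuousOn.exists_continuous_eqOn {X : Type*} [TopologicalSpace X] [NormalSpace X]
    {s : Set X} (hs : IsClosed s) {g : X → ℝ} (hg : ContinuousOn g s) :
    ∃ g' : X → ℝ, Continuous g' ∧ EqOn g' g s := by
  obtain ⟨g', hg'⟩ := ContinuousMap.exists_restrict_eq hs ⟨_, hg.domRestrict⟩
  exact ⟨g', g'.continuous, fun x hx => DFunLike.congr_fun hg' ⟨x, hx⟩⟩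

lemma continuous_intervalIntegral_of_continuous {X : Type*} [TopologicalSpace X]
    {F : X → ℝ → ℝ} (hF : Continuous (uncurry F)) {p q : X → ℝ} (hp : Continuous p)
    (hq : Continuous q) :
    Continuous fun x => ∫ t in p x..q x, F x t := by
  have hsplit : ∀ x, ∫ t in p x..q x, F x t =
      (∫ t in (0:ℝ)..q x, F x t) - ∫ t in (0:ℝ)..p x, F x t := fun x =>
    (integral_interval_sub_left ((hF.uncurry_left x).intervalIntegrable _ _)
      ((hF.uncurry_left x).intervalIntegrable _ _)).symm
  simp_rw [hsplit]
  exact (continuous_parametric_intervalIntegral_of_continuous hF hq).sub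
    (continuous_parametric_intervalIntegral_of_continuous hF hp)

lemma integral_integral_sub_of_continuous {F₁ F₂ : ℝ → ℝ → ℝ} (h₁ : Continuous (uncurry F₁))
    (h₂ : Continuous (uncurry F₂)) {m : ℝ → ℝ} (hm : Continuous m) (a b : ℝ) :
    ∫ τ in a..b, ∫ s in (0:ℝ)..m τ, (F₁ τ s - F₂ τ s) =
      (∫ τ in a..b, ∫ s in (0:ℝ)..m τ, F₁ τ s) - ∫ τ in a..b, ∫ s in (0:ℝ)..m τ, F₂ τ s := by
  rw [← integral_sub
    ((continuous_parametric_intervalIntegral_of_continuous h₁ hm).intervalIntegrable a b)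
    ((continuous_parametric_intervalIntegral_of_continuous h₂ hm).intervalIntegrable a b)]
  exact integral_congr fun τ _ => integral_sub ((h₁.uncurry_left τ).intervalIntegrable _ _)
    ((h₂.uncurry_left τ).intervalIntegrable _ _)

lemma integral_integral_integral_sub_of_continuous {F₁ F₂ : ℝ × ℝ → ℝ → ℝ}
    (h₁ : Continuous (uncurry F₁)) (h₂ : Continuous (uncurry F₂)) {m : ℝ → ℝ}
    (hm : Continuous m) {p q : ℝ × ℝ → ℝ} (hp : Continuous p) (hq : Continuous q) (a b : ℝ) :
    ∫ z in a..b, ∫ s in (0:ℝ)..m z, ∫ τ in p (z, s)..q (z, s), (F₁ (z, s) τ - F₂ (z, s) τ) =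
      (∫ z in a..b, ∫ s in (0:ℝ)..m z, ∫ τ in p (z, s)..q (z, s), F₁ (z, s) τ)
        - ∫ z in a..b, ∫ s in (0:ℝ)..m z, ∫ τ in p (z, s)..q (z, s), F₂ (z, s) τ := by
  rw [← integral_integral_sub_of_continuous
    (F₁ := fun z s => ∫ τ in p (z, s)..q (z, s), F₁ (z, s) τ)
    (F₂ := fun z s => ∫ τ in p (z, s)..q (z, s), F₂ (z, s) τ)
    (continuous_intervalIntegral_of_continuous h₁ hp hq)
    (continuous_intervalIntegral_of_continuous h₂ hp hq) hm]
  exact integral_congr fun z _ => integral_congr fun s _ =>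
    integral_sub ((h₁.uncurry_left _).intervalIntegrable _ _)
      ((h₂.uncurry_left _).intervalIntegrable _ _)

lemma integral_integral_congr {F F' : ℝ → ℝ → ℝ} {m : ℝ → ℝ} {a b : ℝ} (hab : a ≤ b)
    (hm : ∀ τ ∈ Icc a b, 0 ≤ m τ) (h : ∀ τ ∈ Icc a b, ∀ s ∈ Icc 0 (m τ), F τ s = F' τ s) :
    ∫ τ in a..b, ∫ s in (0:ℝ)..m τ, F τ s = ∫ τ in a..b, ∫ s in (0:ℝ)..m τ, F' τ s :=
  integral_congr fun τ hτ => integral_congr fun s hs => by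
    rw [uIcc_of_le hab] at hτ
    rw [uIcc_of_le (hm τ hτ)] at hs
    exact h τ hτ s hs

lemma abs_integral_le_of_abs_le {g : ℝ → ℝ} {p q B : ℝ} (hpq : p ≤ q) (hlen : q - p ≤ 1)
    (hg : ∀ τ ∈ Icc p q, |g τ| ≤ B) : |∫ τ in p..q, g τ| ≤ B := by
  have hB : 0 ≤ B := (abs_nonneg _).trans (hg p ⟨le_rfl, hpq⟩)
  calc |∫ τ in p..q, g τ| ≤ B * |q - p| :=
        intervalIntegral.norm_integral_le_of_norm_le_const (f := g) fun τ hτ =>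
          hg τ (Ioc_subset_Icc_self (by rwa [uIoc_of_le hpq] at hτ))
    _ ≤ B := by
        rw [abs_of_nonneg (sub_nonneg.2 hpq)]
        exact mul_le_of_le_one_right hB hlen

lemma abs_integral_integral_le {F : ℝ → ℝ → ℝ} {m β : ℝ → ℝ} {a b η K : ℝ} (hab : a ≤ b)
    (hm : ∀ τ ∈ Icc a b, m τ ∈ Icc 0 η) (hβ : ∀ s ∈ Icc 0 η, 0 ≤ β s)
    (hβi : IntervalIntegrable β volume 0 η) (hK : 0 ≤ K)
    (hF : ∀ τ ∈ Icc a b, ∀ s ∈ Icc 0 (m τ), |F τ s| ≤ K * β s) :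
    |∫ τ in a..b, ∫ s in (0:ℝ)..m τ, F τ s| ≤ (b - a) * (K * ∫ s in (0:ℝ)..η, β s) := by
  have hinner : ∀ τ ∈ Icc a b, |∫ s in (0:ℝ)..m τ, F τ s| ≤ K * ∫ s in (0:ℝ)..η, β s := by
    intro τ hτ
    obtain ⟨hm0, hmη⟩ := hm τ hτ
    rw [← intervalIntegral.integral_const_mul]
    calc |∫ s in (0:ℝ)..m τ, F τ s| ≤ ∫ s in (0:ℝ)..m τ, K * β s :=
          intervalIntegral.norm_integral_le_of_norm_le (f := F τ) hm0
            (ae_of_all _ fun s hs => hF τ hτ s (Ioc_subset_Icc_self hs))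
            ((hβi.const_mul K).mono_set (uIcc_subset_uIcc_left (mem_uIcc_of_le hm0 hmη)))
      _ ≤ ∫ s in (0:ℝ)..η, K * β s :=
          integral_mono_interval le_rfl hm0 hmη
            ((ae_restrict_iff' measurableSet_Ioc).2 (ae_of_all _ fun s hs =>
              mul_nonneg hK (hβ s (Ioc_subset_Icc_self hs))))
            (hβi.const_mul K)
  calc |∫ τ in a..b, ∫ s in (0:ℝ)..m τ, F τ s|
      ≤ (K * ∫ s in (0:ℝ)..η, β s) * |b - a| :=
        intervalIntegral.norm_integral_le_of_norm_le_const
          (f := fun τ => ∫ s in (0:ℝ)..m τ, F τ s) fun τ hτ =>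
            hinner τ (Ioc_subset_Icc_self (by rwa [uIoc_of_le hab] at hτ))
    _ = (b - a) * (K * ∫ s in (0:ℝ)..η, β s) := by rw [abs_of_nonneg (sub_nonneg.2 hab), mul_comm]

lemma PhiOp_sub {c : ℝ → ℝ} (hc : Continuous c) (lam0 : ℝ) {f H₁ H₂ : ℝ → ℝ → ℝ}
    (hf : Continuous (uncurry f)) (h₁ : Continuous (uncurry H₁)) (h₂ : Continuous (uncurry H₂))
    (ξ η : ℝ) :
    PhiOp c lam0 f (fun τ s => H₁ τ s - H₂ τ s) ξ η =
      PhiOp c lam0 f H₁ ξ η - PhiOp c lam0 f H₂ ξ η := by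
  have hμ : Continuous (uncurry (muT c lam0)) := by unfold muT; fun_prop
  have hμH : ∀ H : ℝ → ℝ → ℝ, Continuous (uncurry H) →
      Continuous (uncurry fun τ s => muT c lam0 τ s * H τ s) := fun H hH => hμ.mul hH
  have hfH : ∀ H : ℝ → ℝ → ℝ, Continuous (uncurry H) →
      Continuous (uncurry fun (x : ℝ × ℝ) τ => f ((τ - x.2) / 2) (x.1 - (τ + x.2) / 2) * H τ x.2) :=
    fun H hH => (hf.comp (by fun_prop : Continuous fun y : (ℝ × ℝ) × ℝ =>
      ((y.2 - y.1.2) / 2, y.1.1 - (y.2 + y.1.2) / 2))).mul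
        (hH.comp (by fun_prop : Continuous fun y : (ℝ × ℝ) × ℝ => (y.2, y.1.2)))
  unfold PhiOp
  simp only [mul_sub]
  rw [integral_integral_sub_of_continuous (hμH H₁ h₁) (hμH H₂ h₂) continuous_const,
    integral_integral_sub_of_continuous (hμH H₁ h₁) (hμH H₂ h₂) continuous_id',
    integral_integral_integral_sub_of_continuous (hfH H₁ h₁) (hfH H₂ h₂) continuous_const
      continuous_fst (by fun_prop : Continuous fun x : ℝ × ℝ => x.1 + η - x.2),
    integral_integral_integral_sub_of_continuous (hfH H₁ h₁) (hfH H₂ h₂) continuous_id'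
      continuous_fst (by fun_prop : Continuous fun x : ℝ × ℝ => 2 * x.1 - x.2)]
  ring

lemma muT_congr {c c' : ℝ → ℝ} (hc : EqOn c c' (Icc 0 1)) (lam0 : ℝ) {τ s : ℝ}
    (h : (τ, s) ∈ Eset) : muT c lam0 τ s = muT c' lam0 τ s := by
  obtain ⟨h0, h1, h2, h3⟩ := mk_mem_Eset_iff.1 h
  rw [muT, muT, hc ⟨by linarith, by linarith⟩, hc ⟨by linarith, by linarith⟩]

lemma PhiOp_congr {c c' : ℝ → ℝ} (hc : EqOn c c' (Icc 0 1)) (lam0 : ℝ) (f : ℝ → ℝ → ℝ)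
    {H H' : ℝ → ℝ → ℝ} (hH : ∀ τ s, (τ, s) ∈ Eset → H τ s = H' τ s) {ξ η : ℝ}
    (hE : (ξ, η) ∈ Eset) : PhiOp c lam0 f H ξ η = PhiOp c' lam0 f H' ξ η := by
  obtain ⟨h0η, hη1, hηξ, hξ2⟩ := mk_mem_Eset_iff.1 hE
  have hμH : ∀ τ s, (τ, s) ∈ Eset → muT c lam0 τ s * H τ s = muT c' lam0 τ s * H' τ s :=
    fun τ s h => by rw [muT_congr hc lam0 h, hH τ s h]
  have hfH : ∀ z s p q, p ≤ q → (∀ τ ∈ Icc p q, (τ, s) ∈ Eset) →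
      ∫ τ in p..q, f ((τ - s) / 2) (z - (τ + s) / 2) * H τ s =
        ∫ τ in p..q, f ((τ - s) / 2) (z - (τ + s) / 2) * H' τ s :=
    fun z s p q hpq hmem => integral_congr fun τ hτ => by
      rw [uIcc_of_le hpq] at hτ
      rw [hH τ s (hmem τ hτ)]
  unfold PhiOp
  rw [integral_integral_congr hηξ (fun _ _ => h0η) fun τ hτ s hs =>
      hμH τ s ⟨hs.1, by linarith [hs.2], by linarith [hs.2, hτ.1], by linarith [hs.2, hτ.2]⟩,
    integral_integral_congr h0η (fun τ hτ => hτ.1) fun τ hτ s hs =>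
      hμH τ s ⟨hs.1, by linarith [hs.2, hτ.2], hs.2, by linarith [hs.2, hτ.2]⟩,
    integral_integral_congr hηξ (fun _ _ => h0η) fun z hz s hs =>
      hfH z s _ _ (by linarith [hs.2]) fun τ hτ =>
        ⟨hs.1, by linarith [hs.2], by linarith [hτ.1, hz.1, hs.2], by linarith [hτ.2, hz.2]⟩,
    integral_integral_congr h0η (fun z hz => hz.1) fun z hz s hs =>
      hfH z s _ _ (by linarith [hs.2]) fun τ hτ =>
        ⟨hs.1, by linarith [hs.2, hz.2], by linarith [hτ.1, hs.2], by linarith [hτ.2, hz.2]⟩]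

lemma abs_PhiOp_le {c : ℝ → ℝ} {lam0 L C : ℝ} {f D : ℝ → ℝ → ℝ} {β : ℝ → ℝ}
    (hμ : ∀ τ s, (τ, s) ∈ Eset → |muT c lam0 τ s| ≤ L) (hf : ∀ x y, |f x y| ≤ C)
    (hβ : ∀ s ∈ Icc 0 1, 0 ≤ β s) (hβi : IntervalIntegrable β volume 0 1)
    (hD : ∀ τ s, (τ, s) ∈ Eset → |D τ s| ≤ β s) {ξ η : ℝ} (hE : (ξ, η) ∈ Eset) :
    |PhiOp c lam0 f D ξ η| ≤ (L + C) * ∫ s in (0:ℝ)..η, β s := by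
  obtain ⟨h0η, hη1, hηξ, hξ2⟩ := mk_mem_Eset_iff.1 hE
  have hL : 0 ≤ L := (abs_nonneg _).trans (hμ 0 0 zero_mem_Eset)
  have hC : 0 ≤ C := (abs_nonneg _).trans (hf 0 0)
  have hβη : ∀ s ∈ Icc 0 η, 0 ≤ β s := fun s hs => hβ s ⟨hs.1, hs.2.trans hη1⟩
  have hβiη : IntervalIntegrable β volume 0 η :=
    hβi.mono_set (uIcc_subset_uIcc_left (mem_uIcc_of_le h0η hη1))
  have hI : 0 ≤ ∫ s in (0:ℝ)..η, β s := integral_nonneg h0η hβη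
  have hμD : ∀ τ s, (τ, s) ∈ Eset → |muT c lam0 τ s * D τ s| ≤ L * β s := fun τ s h => by
    rw [abs_mul]
    exact mul_le_mul (hμ τ s h) (hD τ s h) (abs_nonneg _) hL
  have hfD : ∀ z s p q, p ≤ q → q - p ≤ 1 → (∀ τ ∈ Icc p q, (τ, s) ∈ Eset) →
      |∫ τ in p..q, f ((τ - s) / 2) (z - (τ + s) / 2) * D τ s| ≤ C * β s :=
    fun z s p q hpq hlen hmem => abs_integral_le_of_abs_le hpq hlen fun τ hτ => by
      rw [abs_mul]
      exact mul_le_mul (hf _ _) (hD τ s (hmem τ hτ)) (abs_nonneg _) hC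
  have h₁ := abs_integral_integral_le hηξ (fun _ _ => ⟨h0η, le_rfl⟩) hβη hβiη hL
    fun τ hτ s hs => hμD τ s
      ⟨hs.1, by linarith [hs.2], by linarith [hs.2, hτ.1], by linarith [hs.2, hτ.2]⟩
  have h₂ := abs_integral_integral_le h0η (fun τ hτ => hτ) hβη hβiη hL
    fun τ hτ s hs => hμD τ s ⟨hs.1, by linarith [hs.2, hτ.2], hs.2, by linarith [hs.2, hτ.2]⟩
  have h₃ := abs_integral_integral_le hηξ (fun _ _ => ⟨h0η, le_rfl⟩) hβη hβiη hC
    fun z hz s hs => hfD z s z (z + η - s) (by linarith [hs.2]) (by linarith [hs.1]) fun τ hτ =>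
      ⟨hs.1, by linarith [hs.2], by linarith [hτ.1, hz.1, hs.2], by linarith [hτ.2, hz.2]⟩
  have h₄ := abs_integral_integral_le h0η (fun z hz => hz) hβη hβiη hC
    fun z hz s hs => hfD z s z (2 * z - s) (by linarith [hs.2]) (by linarith [hs.1, hz.2])
      fun τ hτ =>
        ⟨hs.1, by linarith [hs.2, hz.2], by linarith [hτ.1, hs.2], by linarith [hτ.2, hz.2]⟩
  have hLI := mul_nonneg hL hI
  have hCI := mul_nonneg hC hI
  replace h₁ := h₁.trans (mul_le_mul_of_nonneg_right (by linarith : ξ - η ≤ 2) hLI)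
  replace h₂ := h₂.trans (mul_le_of_le_one_left hLI (by linarith))
  replace h₃ := h₃.trans (mul_le_mul_of_nonneg_right (by linarith : ξ - η ≤ 2) hCI)
  replace h₄ := h₄.trans (mul_le_of_le_one_left hCI (by linarith))
  unfold PhiOp
  rw [abs_le] at h₁ h₂ h₃ h₄
  rw [add_mul, abs_le]
  constructor <;> linarith

lemma abs_le_pow_div_factorial_of_eq_PhiOp {c : ℝ → ℝ} {lam0 L C M : ℝ} {f D : ℝ → ℝ → ℝ}
    (hμ : ∀ τ s, (τ, s) ∈ Eset → |muT c lam0 τ s| ≤ L) (hf : ∀ x y, |f x y| ≤ C)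
    (hM : ∀ τ s, (τ, s) ∈ Eset → |D τ s| ≤ M)
    (hD : ∀ τ s, (τ, s) ∈ Eset → D τ s = PhiOp c lam0 f D τ s) (n : ℕ) :
    ∀ τ s, (τ, s) ∈ Eset → |D τ s| ≤ M * (L + C) ^ n / n ! * s ^ n := by
  have hL : 0 ≤ L := (abs_nonneg _).trans (hμ 0 0 zero_mem_Eset)
  have hC : 0 ≤ C := (abs_nonneg _).trans (hf 0 0)
  have hM0 : 0 ≤ M := (abs_nonneg _).trans (hM 0 0 zero_mem_Eset)
  induction n with
  | zero => simpa using hM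
  | succ n ih =>
    intro ξ η hE
    rw [hD ξ η hE]
    calc |PhiOp c lam0 f D ξ η|
        ≤ (L + C) * ∫ s in (0:ℝ)..η, M * (L + C) ^ n / n ! * s ^ n :=
          abs_PhiOp_le hμ hf (fun s hs => by have := hs.1; positivity)
            (Continuous.intervalIntegrable (by fun_prop) _ _) ih hE
      _ = M * (L + C) ^ (n + 1) / (n + 1)! * η ^ (n + 1) := by
          rw [intervalIntegral.integral_const_mul, integral_pow, Nat.factorial_succ]
          push_cast
          field_simp
          ring

lemma eq_zero_of_eq_PhiOp {c : ℝ → ℝ} {lam0 L C M : ℝ} {f D : ℝ → ℝ → ℝ}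
    (hμ : ∀ τ s, (τ, s) ∈ Eset → |muT c lam0 τ s| ≤ L) (hf : ∀ x y, |f x y| ≤ C)
    (hM : ∀ τ s, (τ, s) ∈ Eset → |D τ s| ≤ M)
    (hD : ∀ τ s, (τ, s) ∈ Eset → D τ s = PhiOp c lam0 f D τ s) :
    ∀ ξ η, (ξ, η) ∈ Eset → D ξ η = 0 := by
  intro ξ η hE
  have hlim : Tendsto (fun n : ℕ => M * ((L + C) * η) ^ n / n !) atTop (𝓝 0) := by
    simpa [mul_div_assoc] using
      (FloorSemiring.tendsto_pow_div_factorial_atTop ((L + C) * η)).const_mul M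
  refine abs_nonpos_iff.1 (ge_of_tendsto' hlim fun n => ?_)
  calc |D ξ η| ≤ M * (L + C) ^ n / n ! * η ^ n :=
        abs_le_pow_div_factorial_of_eq_PhiOp hμ hf hM hD n ξ η hE
    _ = M * ((L + C) * η) ^ n / n ! := by rw [mul_pow]; ring

theorem stmt17 (c1 : ℝ → ℝ) (lam0 : ℝ) (f : ℝ → ℝ → ℝ)
    (hc1 : ContDiffOn ℝ 1 c1 (Set.Icc 0 1))
    (hfc : Continuous (fun q : ℝ × ℝ => f q.1 q.2))
    (hfbdd : ∃ C : ℝ, ∀ x y : ℝ, |f x y| ≤ C)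
    (G₁ G₂ : ℝ → ℝ → ℝ)
    (hG₁_cont : ContinuousOn (fun q : ℝ × ℝ => G₁ q.1 q.2) Eset)
    (hG₂_cont : ContinuousOn (fun q : ℝ × ℝ => G₂ q.1 q.2) Eset)
    (hG₁ : ∀ ξ η : ℝ, (ξ, η) ∈ Eset → G₁ ξ η = Gzero lam0 f ξ η + PhiOp c1 lam0 f G₁ ξ η)
    (hG₂ : ∀ ξ η : ℝ, (ξ, η) ∈ Eset → G₂ ξ η = Gzero lam0 f ξ η + PhiOp c1 lam0 f G₂ ξ η) :
    ∀ ξ η : ℝ, (ξ, η) ∈ Eset → G₁ ξ η = G₂ ξ η := by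
  obtain ⟨C, hfC⟩ := hfbdd
  obtain ⟨c, hc, hcc₁⟩ := hc1.continuousOn.exists_continuous_eqOn isClosed_Icc
  obtain ⟨g₁, hg₁, hg₁G₁⟩ := hG₁_cont.exists_continuous_eqOn isClosed_Eset
  obtain ⟨g₂, hg₂, hg₂G₂⟩ := hG₂_cont.exists_continuous_eqOn isClosed_Eset
  have hg₁G₁' : ∀ τ s, (τ, s) ∈ Eset → g₁ (τ, s) = G₁ τ s := fun _ _ h => hg₁G₁ h
  have hg₂G₂' : ∀ τ s, (τ, s) ∈ Eset → g₂ (τ, s) = G₂ τ s := fun _ _ h => hg₂G₂ h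
  have hfix : ∀ ξ η, (ξ, η) ∈ Eset →
      g₁ (ξ, η) - g₂ (ξ, η) = PhiOp c lam0 f (fun τ s => g₁ (τ, s) - g₂ (τ, s)) ξ η := by
    intro ξ η hE
    rw [PhiOp_sub (H₁ := fun τ s => g₁ (τ, s)) (H₂ := fun τ s => g₂ (τ, s)) hc lam0 hfc hg₁ hg₂,
      PhiOp_congr hcc₁ lam0 f hg₁G₁' hE, PhiOp_congr hcc₁ lam0 f hg₂G₂' hE,
      hg₁G₁' ξ η hE, hg₂G₂' ξ η hE]
    linarith [hG₁ ξ η hE, hG₂ ξ η hE]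
  obtain ⟨L, hL⟩ := isCompact_Eset.exists_bound_of_continuousOn
    (by unfold muT; fun_prop : Continuous (uncurry (muT c lam0))).continuousOn
  obtain ⟨M, hM⟩ := isCompact_Eset.exists_bound_of_continuousOn (hg₁.sub hg₂).continuousOn
  intro ξ η hE
  have hD := eq_zero_of_eq_PhiOp (D := fun τ s => g₁ (τ, s) - g₂ (τ, s))
    (fun τ s h => hL (τ, s) h) hfC (fun τ s h => hM (τ, s) h) hfix ξ η hE
  rw [← hg₁G₁' ξ η hE, ← hg₂G₂' ξ η hE]
  linarith
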